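/- arXiv:1710.07734 — 4 statements merged into one kernel-verified Lean document; each statement's English description precedes it below -/
import Mathlib

section
/- Let a < b be real numbers, k ∈ ℕ, and let τ_sp⁻, τ_sq⁻, τ_su⁻, τ_rp⁻, τ_rq⁻, τ_ru⁻, τ_pq⁺, τ_pu⁺, τ_sq⁺, τ_su⁺, τ_rq⁺, τ_ru⁺ be real numbers with Δ := θ_q^s θ_u^r − θ_u^s θ_q^r ≠ 0. Then for any continuous functions u, q, p, r, s : [a,b] → ℝ there exists a unique quintuple (Πu, Πq, Πp, Πr, Πs) of real polynomials of degree at most k such that, writing δ_ω := ω − Πω for ω ∈ {u,q,p,r,s}: (i) ∫_a^b δ_ω(x) v(x) dx = 0 for every polynomial v of degree at most k−1 and every ω ∈ {u,q,p,r,s}; (ii) at the right endpoint b: δ_s(b) − τ_su⁻ δ_u(b) − τ_sq⁻ δ_q(b) − τ_sp⁻ δ_p(b) = 0 and δ_r(b) − τ_ru⁻ δ_u(b) − τ_rq⁻ δ_q(b) − τ_rp⁻ δ_p(b) = 0; (iii) at the left endpoint a (where the outward normal is −1): δ_p(a) + τ_pu⁺ δ_u(a) + τ_pq⁺ δ_q(a)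 = 0, δ_s(a) + τ_su⁺ δ_u(a) + τ_sq⁺ δ_q(a) = 0, and δ_r(a) + τ_ru⁺ δ_u(a) + τ_rq⁺ δ_q(a) = 0. -/
open MeasureTheory intervalIntegral Polynomial Set

/-!
The 5(k + 1) coefficients of (Πu, …, Πs) are subject to 5k + 5 linear conditions, so it suffices
to show that the homogeneous problem has only the trivial solution. A polynomial P of degree ≤ k
orthogonal to all polynomials of degree < k cannot vanish at a or b unless P = 0: otherwise
P = (x - c)ψ with deg ψ < k, and 0 = ∫ Pψ = ∫ (x - c)ψ², where x - c has constant sign on [a, b].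
Hence the three homogeneous conditions at a force Πp + τ_pu⁺ Πu + τ_pq⁺ Πq = 0 and the analogous
identities for Πs and Πr; substituted into the two conditions at b they give a linear system for
(Πu(b), Πq(b)) with determinant Δ, so Πu = Πq = 0, and then all five vanish.
-/

noncomputable section

variable {a b : ℝ}

theorem Polynomial.eq_zero_of_intervalIntegral_eq_zero_of_nonneg (hab : a < b) {P : ℝ[X]}
    (hP : ∀ x ∈ Icc a b, 0 ≤ P.eval x) (hint : ∫ x in a..b, P.eval x = 0) : P = 0 := by
  by_contra hP0
  obtain ⟨c, hc, hPc⟩ : ∃ c ∈ Ioo a b, P.eval c ≠ 0 := by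
    by_contra! h
    exact hP0 (P.eq_zero_of_infinite_isRoot ((Ioo_infinite hab).mono h))
  refine (integral_pos hab P.continuous.continuousOn (fun x hx => hP x (Ioc_subset_Icc_self hx))
    ⟨c, Ioo_subset_Icc_self hc, (hP c (Ioo_subset_Icc_self hc)).lt_of_ne' hPc⟩).ne' hint

theorem Polynomial.finrank_degreeLT (n : ℕ) : Module.finrank ℝ (ℝ[X]_n) = n :=
  (degreeLTEquiv ℝ n).finrank_eq.trans (Module.finrank_fin_fun ℝ)

def moments (a b : ℝ) (k : ℕ) (f : ℝ → ℝ) : Fin k → ℝ :=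
  fun j => ∫ x in a..b, f x * x ^ (j : ℕ)

section Moments

variable {k : ℕ} {f g : ℝ → ℝ}

theorem moments_add (hf : ContinuousOn f (uIcc a b)) (hg : ContinuousOn g (uIcc a b)) :
    moments a b k (fun x => f x + g x) = moments a b k f + moments a b k g := by
  ext j
  simp only [moments, Pi.add_apply, add_mul]
  exact integral_add (hf.mul (continuous_pow _).continuousOn).intervalIntegrable
    (hg.mul (continuous_pow _).continuousOn).intervalIntegrable

theorem moments_sub (hf : ContinuousOn f (uIcc a b)) (hg : ContinuousOn g (uIcc a b)) :
    moments a b k (fun x => f x - g x) = moments a b k f - moments a b k g := by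
  ext j
  simp only [moments, Pi.sub_apply, sub_mul]
  exact integral_sub (hf.mul (continuous_pow _).continuousOn).intervalIntegrable
    (hg.mul (continuous_pow _).continuousOn).intervalIntegrable

theorem moments_const_mul (c : ℝ) :
    moments a b k (fun x => c * f x) = c • moments a b k f := by
  ext j
  simp only [moments, Pi.smul_apply, smul_eq_mul, mul_assoc, intervalIntegral.integral_const_mul]

theorem moments_eq_zero_iff (hf : ContinuousOn f (uIcc a b)) :
    moments a b k f = 0 ↔ ∀ v : ℝ[X], v.degree < k → ∫ x in a..b, f x * v.eval x = 0 := by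
  refine ⟨fun h v hv => ?_, fun h => funext fun j => ?_⟩
  · have hv' : v ∈ degreeLT ℝ k := mem_degreeLT.2 hv
    set c := degreeLTEquiv ℝ k ⟨v, hv'⟩ with hc
    have hmon : ∀ i : Fin k, ∫ x in a..b, f x * x ^ (i : ℕ) = 0 := congrFun h
    calc ∫ x in a..b, f x * v.eval x
        = ∫ x in a..b, ∑ i, c i * (f x * x ^ (i : ℕ)) := by
          simp_rw [eval_eq_sum_degreeLTEquiv hv', ← hc, Finset.mul_sum, mul_left_comm (f _)]
      _ = ∑ i, c i * ∫ x in a..b, f x * x ^ (i : ℕ) := by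
          rw [integral_finsetSum (f := fun i x => c i * (f x * x ^ (i : ℕ)))
            fun i _ => ((hf.mul (continuous_pow i).continuousOn).intervalIntegrable).const_mul _]
          simp_rw [intervalIntegral.integral_const_mul]
      _ = 0 := by simp [hmon]
  · have hdeg : (X ^ (j : ℕ) : ℝ[X]).degree < k :=
      (degree_X_pow_le _).trans_lt (WithBot.coe_lt_coe.2 j.is_lt)
    simpa [moments] using h _ hdeg

end Moments

def momentMap (a b : ℝ) (k : ℕ) : ℝ[X] →ₗ[ℝ] Fin k → ℝ where
  toFun P := moments a b k fun x => P.eval x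
  map_add' P Q := by
    simp only [eval_add]
    exact moments_add P.continuous.continuousOn Q.continuous.continuousOn
  map_smul' c P := by
    simp only [eval_smul, smul_eq_mul, RingHom.id_apply]
    exact moments_const_mul c

theorem momentMap_apply (k : ℕ) (P : ℝ[X]) :
    momentMap a b k P = moments a b k (fun x => P.eval x) := rfl

def orthogonalDegreeLE (a b : ℝ) (k : ℕ) : Submodule ℝ ℝ[X] :=
  degreeLE ℝ k ⊓ LinearMap.ker (momentMap a b k)

theorem eq_zero_of_mem_orthogonalDegreeLE_of_eval_eq_zero (hab : a < b) {k : ℕ} {P : ℝ[X]}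
    (hP : P ∈ orthogonalDegreeLE a b k) {c : ℝ} (hc : c ∉ Ioo a b) (hPc : P.eval c = 0) :
    P = 0 := by
  obtain ⟨hdeg, horth⟩ := Submodule.mem_inf.1 hP
  obtain ⟨ψ, rfl⟩ := dvd_iff_isRoot.2 hPc
  rcases eq_or_ne ψ 0 with rfl | hψ0
  · exact mul_zero _
  have hψ : ψ.degree < k := by
    rw [mem_degreeLE, degree_mul, degree_X_sub_C, degree_eq_natDegree hψ0] at hdeg
    rw [degree_eq_natDegree hψ0]
    norm_cast at hdeg ⊢
    omega
  have hint := (moments_eq_zero_iff ((X - C c) * ψ).continuous.continuousOn).1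
    (LinearMap.mem_ker.1 horth) ψ hψ
  have hsign : ∀ x ∈ Icc a b, 0 ≤ ((a + b) / 2 - c) * (x - c) := by
    intro x hx
    simp only [mem_Ioo, not_and_or, not_lt] at hc
    rcases hc with h | h <;> nlinarith [hx.1, hx.2]
  have hR : C ((a + b) / 2 - c) * ((X - C c) * ψ * ψ) = 0 := by
    refine eq_zero_of_intervalIntegral_eq_zero_of_nonneg hab (fun x hx => ?_) ?_
    · have := mul_nonneg (hsign x hx) (mul_self_nonneg (ψ.eval x))
      simp only [eval_mul, eval_C, eval_sub, eval_X]
      linarith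
    · simp only [eval_mul, eval_C] at hint ⊢
      rw [intervalIntegral.integral_const_mul, hint, mul_zero]
  have hmid : (a + b) / 2 - c ≠ 0 := fun h =>
    hc (sub_eq_zero.1 h ▸ ⟨by linarith, by linarith⟩)
  exact (mul_eq_zero.1 ((mul_eq_zero.1 hR).resolve_left (C_ne_zero.2 hmid))).resolve_right hψ0

/-- The stabilization parameters: `tspm` is τ_sp⁻, `tpqp` is τ_pq⁺, and so on. -/
structure Stabilization where
  tspm : ℝ
  tsqm : ℝ
  tsum : ℝ
  trpm : ℝ
  trqm : ℝ
  trum : ℝ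
  tpqp : ℝ
  tpup : ℝ
  tsqp : ℝ
  tsup : ℝ
  trqp : ℝ
  trup : ℝ

namespace Stabilization

variable (τ : Stabilization)

def det : ℝ :=
  (τ.tsqm + τ.tsqp - τ.tspm * τ.tpqp) * (τ.trum + τ.trup - τ.trpm * τ.tpup)
    - (τ.tsum + τ.tsup - τ.tspm * τ.tpup) * (τ.trqm + τ.trqp - τ.trpm * τ.tpqp)

def traceDefect (a b : ℝ) (fu fq fp fr fs : ℝ → ℝ) : Fin 5 → ℝ :=
  ![fs b - τ.tsum * fu b - τ.tsqm * fq b - τ.tspm * fp b,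
    fr b - τ.trum * fu b - τ.trqm * fq b - τ.trpm * fp b,
    fp a + τ.tpup * fu a + τ.tpqp * fq a,
    fs a + τ.tsup * fu a + τ.tsqp * fq a,
    fr a + τ.trup * fu a + τ.trqp * fq a]

/-- The left-hand sides of (i)–(iii) for the defects `fu, …, fs`, with (i) tested only against the
monomials `x ^ j`, `j < k`. -/
def hdgDefect (a b : ℝ) (k : ℕ) (fu fq fp fr fs : ℝ → ℝ) :
    (Fin 5 → Fin k → ℝ) × (Fin 5 → ℝ) :=
  (![moments a b k fu, moments a b k fq, moments a b k fp, moments a b k fr, moments a b k fs],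
    τ.traceDefect a b fu fq fp fr fs)

def hdgMap (a b : ℝ) (k : ℕ) :
    (ℝ[X]_(k + 1) × ℝ[X]_(k + 1) × ℝ[X]_(k + 1) × ℝ[X]_(k + 1) × ℝ[X]_(k + 1)) →ₗ[ℝ]
      (Fin 5 → Fin k → ℝ) × (Fin 5 → ℝ) where
  toFun P := τ.hdgDefect a b k (P.1.1.eval ·) (P.2.1.1.eval ·) (P.2.2.1.1.eval ·)
    (P.2.2.2.1.1.eval ·) (P.2.2.2.2.1.eval ·)
  map_add' P Q := by
    simp only [hdgDefect, ← momentMap_apply, Prod.fst_add, Prod.snd_add, Submodule.coe_add,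
      map_add]
    ext i : 2 <;> fin_cases i <;> simp [traceDefect] <;> ring
  map_smul' c P := by
    simp only [hdgDefect, ← momentMap_apply, Prod.smul_fst, Prod.smul_snd, Submodule.coe_smul,
      map_smul]
    ext i : 2 <;> fin_cases i <;> simp [traceDefect] <;> ring

variable {τ} {k : ℕ} {u q p r s : ℝ → ℝ}

theorem eq_zero_of_traceDefect_eq_zero (hab : a < b) (hΔ : τ.det ≠ 0) {Pu Pq Pp Pr Ps : ℝ[X]}
    (hu : Pu ∈ orthogonalDegreeLE a b k) (hq : Pq ∈ orthogonalDegreeLE a b k)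
    (hp : Pp ∈ orthogonalDegreeLE a b k) (hr : Pr ∈ orthogonalDegreeLE a b k)
    (hs : Ps ∈ orthogonalDegreeLE a b k)
    (h : τ.traceDefect a b (Pu.eval ·) (Pq.eval ·) (Pp.eval ·) (Pr.eval ·) (Ps.eval ·) = 0) :
    Pu = 0 ∧ Pq = 0 ∧ Pp = 0 ∧ Pr = 0 ∧ Ps = 0 := by
  have ha : a ∉ Ioo a b := fun h => h.1.false
  have hb : b ∉ Ioo a b := fun h => h.2.false
  simp only [traceDefect, Matrix.cons_eq_zero_iff, Matrix.zero_empty, and_true] at h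
  obtain ⟨hsb, hrb, hpa, hsa, hra⟩ := h
  have hp' : Pp + τ.tpup • Pu + τ.tpqp • Pq = 0 :=
    eq_zero_of_mem_orthogonalDegreeLE_of_eval_eq_zero hab
      (add_mem (add_mem hp (Submodule.smul_mem _ _ hu)) (Submodule.smul_mem _ _ hq)) ha
      (by simpa using hpa)
  have hs' : Ps + τ.tsup • Pu + τ.tsqp • Pq = 0 :=
    eq_zero_of_mem_orthogonalDegreeLE_of_eval_eq_zero hab
      (add_mem (add_mem hs (Submodule.smul_mem _ _ hu)) (Submodule.smul_mem _ _ hq)) ha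
      (by simpa using hsa)
  have hr' : Pr + τ.trup • Pu + τ.trqp • Pq = 0 :=
    eq_zero_of_mem_orthogonalDegreeLE_of_eval_eq_zero hab
      (add_mem (add_mem hr (Submodule.smul_mem _ _ hu)) (Submodule.smul_mem _ _ hq)) ha
      (by simpa using hra)
  have hpb := congrArg (eval b) hp'
  have hsb' := congrArg (eval b) hs'
  have hrb' := congrArg (eval b) hr'
  simp only [eval_add, eval_smul, smul_eq_mul, eval_zero] at hpb hsb' hrb'
  have hub : Pu.eval b = 0 := by
    refine (mul_eq_zero.1 (?_ : τ.det * Pu.eval b = 0)).resolve_left hΔ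
    unfold det
    linear_combination (τ.tsqm + τ.tsqp - τ.tspm * τ.tpqp) * (hrb' - hrb - τ.trpm * hpb)
      - (τ.trqm + τ.trqp - τ.trpm * τ.tpqp) * (hsb' - hsb - τ.tspm * hpb)
  have hqb : Pq.eval b = 0 := by
    refine (mul_eq_zero.1 (?_ : τ.det * Pq.eval b = 0)).resolve_left hΔ
    unfold det
    linear_combination (τ.trum + τ.trup - τ.trpm * τ.tpup) * (hsb' - hsb - τ.tspm * hpb)
      - (τ.tsum + τ.tsup - τ.tspm * τ.tpup) * (hrb' - hrb - τ.trpm * hpb)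
  obtain rfl := eq_zero_of_mem_orthogonalDegreeLE_of_eval_eq_zero hab hu hb hub
  obtain rfl := eq_zero_of_mem_orthogonalDegreeLE_of_eval_eq_zero hab hq hb hqb
  simp_all

theorem hdgDefect_eq_zero_iff (hu : ContinuousOn u (uIcc a b)) (hq : ContinuousOn q (uIcc a b))
    (hp : ContinuousOn p (uIcc a b)) (hr : ContinuousOn r (uIcc a b))
    (hs : ContinuousOn s (uIcc a b)) :
    τ.hdgDefect a b k u q p r s = 0 ↔
      (∀ v : ℝ[X], v.degree < k →
        (∫ x in a..b, u x * v.eval x) = 0 ∧ (∫ x in a..b, q x * v.eval x) = 0 ∧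
        (∫ x in a..b, p x * v.eval x) = 0 ∧ (∫ x in a..b, r x * v.eval x) = 0 ∧
        (∫ x in a..b, s x * v.eval x) = 0) ∧
      (s b - τ.tsum * u b - τ.tsqm * q b - τ.tspm * p b = 0) ∧
      (r b - τ.trum * u b - τ.trqm * q b - τ.trpm * p b = 0) ∧
      (p a + τ.tpup * u a + τ.tpqp * q a = 0) ∧
      (s a + τ.tsup * u a + τ.tsqp * q a = 0) ∧
      (r a + τ.trup * u a + τ.trqp * q a = 0) := by
  simp only [hdgDefect, traceDefect, Prod.mk_eq_zero, Matrix.cons_eq_zero_iff, Matrix.zero_empty,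
    and_true, moments_eq_zero_iff hu, moments_eq_zero_iff hq, moments_eq_zero_iff hp,
    moments_eq_zero_iff hr, moments_eq_zero_iff hs, ← forall_and]

theorem hdgDefect_sub_eval (hu : ContinuousOn u (uIcc a b)) (hq : ContinuousOn q (uIcc a b))
    (hp : ContinuousOn p (uIcc a b)) (hr : ContinuousOn r (uIcc a b))
    (hs : ContinuousOn s (uIcc a b)) (Pu Pq Pp Pr Ps : ℝ[X]) :
    τ.hdgDefect a b k (fun x => u x - Pu.eval x) (fun x => q x - Pq.eval x)
        (fun x => p x - Pp.eval x) (fun x => r x - Pr.eval x) (fun x => s x - Ps.eval x) =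
      τ.hdgDefect a b k u q p r s -
        τ.hdgDefect a b k (Pu.eval ·) (Pq.eval ·) (Pp.eval ·) (Pr.eval ·) (Ps.eval ·) := by
  have hP : ∀ P : ℝ[X], ContinuousOn (P.eval ·) (uIcc a b) := fun P => P.continuous.continuousOn
  simp only [hdgDefect, moments_sub hu (hP Pu), moments_sub hq (hP Pq), moments_sub hp (hP Pp),
    moments_sub hr (hP Pr), moments_sub hs (hP Ps), Prod.mk_sub_mk]
  congr 1
  · ext i : 1; fin_cases i <;> rfl
  · ext i; fin_cases i <;> simp [traceDefect] <;> ring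

theorem hdgMap_bijective (hab : a < b) (hΔ : τ.det ≠ 0) :
    Function.Bijective (τ.hdgMap a b k) := by
  have hinj : Function.Injective (τ.hdgMap a b k) := by
    rw [← LinearMap.ker_eq_bot, LinearMap.ker_eq_bot']
    rintro ⟨⟨Pu, hu⟩, ⟨Pq, hq⟩, ⟨Pp, hp⟩, ⟨Pr, hr⟩, ⟨Ps, hs⟩⟩ h
    have mem : ∀ P ∈ ℝ[X]_(k + 1), momentMap a b k P = 0 → P ∈ orthogonalDegreeLE a b k :=
      fun P hP hP0 =>
        Submodule.mem_inf.2 ⟨degreeLT_succ_eq_degreeLE (R := ℝ) ▸ hP, LinearMap.mem_ker.2 hP0⟩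
    simp only [hdgMap, hdgDefect, ← momentMap_apply, LinearMap.coe_mk, AddHom.coe_mk,
      Prod.mk_eq_zero, Matrix.cons_eq_zero_iff, Matrix.zero_empty, and_true] at h
    obtain ⟨⟨hmu, hmq, hmp, hmr, hms⟩, htr⟩ := h
    obtain ⟨rfl, rfl, rfl, rfl, rfl⟩ := eq_zero_of_traceDefect_eq_zero hab hΔ (mem _ hu hmu)
      (mem _ hq hmq) (mem _ hp hmp) (mem _ hr hmr) (mem _ hs hms) htr
    rfl
  refine ⟨hinj, (LinearMap.injective_iff_surjective_of_finrank_eq_finrank ?_).1 hinj⟩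
  simp only [Module.finrank_prod, finrank_degreeLT, Module.finrank_pi_fintype, Module.finrank_self,
    Finset.sum_const, Finset.card_univ, Fintype.card_fin, smul_eq_mul]
  ring

theorem existsUnique_hdgDefect_eq_zero (hab : a < b) (hΔ : τ.det ≠ 0)
    (hu : ContinuousOn u (uIcc a b)) (hq : ContinuousOn q (uIcc a b))
    (hp : ContinuousOn p (uIcc a b)) (hr : ContinuousOn r (uIcc a b))
    (hs : ContinuousOn s (uIcc a b)) :
    ∃! P : ℝ[X] × ℝ[X] × ℝ[X] × ℝ[X] × ℝ[X],
      P.1.degree ≤ k ∧ P.2.1.degree ≤ k ∧ P.2.2.1.degree ≤ k ∧ P.2.2.2.1.degree ≤ k ∧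
      P.2.2.2.2.degree ≤ k ∧
      τ.hdgDefect a b k (fun x => u x - P.1.eval x) (fun x => q x - P.2.1.eval x)
        (fun x => p x - P.2.2.1.eval x) (fun x => r x - P.2.2.2.1.eval x)
        (fun x => s x - P.2.2.2.2.eval x) = 0 := by
  have hT := τ.hdgMap_bijective (k := k) hab hΔ
  have hmem : ∀ {P : ℝ[X]}, P ∈ ℝ[X]_(k + 1) ↔ P.degree ≤ k := by
    intro P
    rw [degreeLT_succ_eq_degreeLE, mem_degreeLE]
  have hsolves :
      ∀ P : ℝ[X]_(k + 1) × ℝ[X]_(k + 1) × ℝ[X]_(k + 1) × ℝ[X]_(k + 1) × ℝ[X]_(k + 1),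
      τ.hdgDefect a b k (fun x => u x - P.1.1.eval x) (fun x => q x - P.2.1.1.eval x)
        (fun x => p x - P.2.2.1.1.eval x) (fun x => r x - P.2.2.2.1.1.eval x)
        (fun x => s x - P.2.2.2.2.1.eval x) = 0 ↔
      τ.hdgMap a b k P = τ.hdgDefect a b k u q p r s := by
    intro P
    rw [hdgDefect_sub_eval hu hq hp hr hs, sub_eq_zero, eq_comm]
    rfl
  obtain ⟨P, hP⟩ := hT.2 (τ.hdgDefect a b k u q p r s)
  refine ⟨(P.1, P.2.1, P.2.2.1, P.2.2.2.1, P.2.2.2.2), ⟨hmem.1 P.1.2, hmem.1 P.2.1.2,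
    hmem.1 P.2.2.1.2, hmem.1 P.2.2.2.1.2, hmem.1 P.2.2.2.2.2, (hsolves P).2 hP⟩, ?_⟩
  rintro ⟨Yu, Yq, Yp, Yr, Ys⟩ ⟨hYu, hYq, hYp, hYr, hYs, hY⟩
  obtain rfl := hT.1 (((hsolves (⟨Yu, hmem.2 hYu⟩, ⟨Yq, hmem.2 hYq⟩, ⟨Yp, hmem.2 hYp⟩,
    ⟨Yr, hmem.2 hYr⟩, ⟨Ys, hmem.2 hYs⟩)).1 hY).trans hP.symm)
  rfl

end Stabilization

end

theorem stmt_2 (a b : ℝ) (hab : a < b) (k : ℕ)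
    (tspm tsqm tsum trpm trqm trum tpqp tpup tsqp tsup trqp trup : ℝ)
    (hΔ : (tsqm + tsqp - tspm * tpqp) * (trum + trup - trpm * tpup)
        - (tsum + tsup - tspm * tpup) * (trqm + trqp - trpm * tpqp) ≠ 0)
    (u q p r s : ℝ → ℝ)
    (hu : ContinuousOn u (Set.Icc a b)) (hq : ContinuousOn q (Set.Icc a b))
    (hp : ContinuousOn p (Set.Icc a b)) (hr : ContinuousOn r (Set.Icc a b))
    (hs : ContinuousOn s (Set.Icc a b)) :
    ∃! P : Polynomial ℝ × Polynomial ℝ × Polynomial ℝ × Polynomial ℝ × Polynomial ℝ,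
      P.1.degree ≤ (k : ℕ) ∧ P.2.1.degree ≤ (k : ℕ) ∧ P.2.2.1.degree ≤ (k : ℕ) ∧
      P.2.2.2.1.degree ≤ (k : ℕ) ∧ P.2.2.2.2.degree ≤ (k : ℕ) ∧
      (∀ v : Polynomial ℝ, v.degree < (k : ℕ) →
        (∫ x in a..b, (u x - P.1.eval x) * v.eval x) = 0 ∧
        (∫ x in a..b, (q x - P.2.1.eval x) * v.eval x) = 0 ∧
        (∫ x in a..b, (p x - P.2.2.1.eval x) * v.eval x) = 0 ∧
        (∫ x in a..b, (r x - P.2.2.2.1.eval x) * v.eval x) = 0 ∧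
        (∫ x in a..b, (s x - P.2.2.2.2.eval x) * v.eval x) = 0) ∧
      ((s b - P.2.2.2.2.eval b) - tsum * (u b - P.1.eval b)
        - tsqm * (q b - P.2.1.eval b) - tspm * (p b - P.2.2.1.eval b) = 0) ∧
      ((r b - P.2.2.2.1.eval b) - trum * (u b - P.1.eval b)
        - trqm * (q b - P.2.1.eval b) - trpm * (p b - P.2.2.1.eval b) = 0) ∧
      ((p a - P.2.2.1.eval a) + tpup * (u a - P.1.eval a)
        + tpqp * (q a - P.2.1.eval a) = 0) ∧
      ((s a - P.2.2.2.2.eval a) + tsup * (u a - P.1.eval a)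
        + tsqp * (q a - P.2.1.eval a) = 0) ∧
      ((r a - P.2.2.2.1.eval a) + trup * (u a - P.1.eval a)
        + trqp * (q a - P.2.1.eval a) = 0) := by
  let τ : Stabilization := ⟨tspm, tsqm, tsum, trpm, trqm, trum, tpqp, tpup, tsqp, tsup, trqp, trup⟩
  rw [← uIcc_of_le hab.le] at hu hq hp hr hs
  refine (existsUnique_congr fun P => ?_).1
    (τ.existsUnique_hdgDefect_eq_zero (k := k) hab hΔ hu hq hp hr hs)
  have hδ : ∀ {f : ℝ → ℝ} (Q : ℝ[X]), ContinuousOn f (uIcc a b) →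
      ContinuousOn (fun x => f x - Q.eval x) (uIcc a b) :=
    fun Q hf => hf.sub Q.continuous.continuousOn
  rw [τ.hdgDefect_eq_zero_iff (hδ _ hu) (hδ _ hq) (hδ _ hp) (hδ _ hr) (hδ _ hs)]
end

section
/- Let β ∈ ℝ with β ≠ 0 and let τ_su, τ_sq, τ_sp, τ_ru, τ_rq, τ_rp ∈ ℝ. For η = (η_u, η_q, η_p, η_ut, η_qt, η_pt) ∈ ℝ⁶ define T⁻(η) = (−β τ_su) η_u² + (β τ_rq) η_q² + (−β/2) η_p² + (−1/(2β) − β τ_su) η_ut² + (−1/(2β) + β τ_rq) η_qt² + (−β/2) η_pt² + (−τ_ru + τ_su τ_ru) η_u η_ut + (−τ_sq + τ_sq τ_rq) η_q η_qt + (τ_rp + τ_sp τ_rp) η_p η_pt + (−β τ_sq + β τ_ru) η_u η_q + (−β τ_sp) η_u η_p + (β τ_rp) η_p η_q + (1 − τ_rq + τ_sq τ_ru) η_q η_ut + (−τ_su + τ_su τ_rq) η_u η_qt + (1 − τ_sp + τ_sp τ_rq) η_p η_qt + (τ_rq + τ_sq τ_rp) η_q η_pt + (τ_ru + τ_su τ_rp)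 η_u η_pt + (−τ_rp + τ_sp τ_ru) η_p η_ut + (1/β − β τ_sp) η_ut η_pt + (−β τ_sq + β τ_ru) η_qt η_ut + (β τ_rp) η_qt η_pt. If β = −1, τ_su = 1, τ_rq = −1, and τ_sq = τ_sp = τ_ru = τ_rp = 0, then for every η ∈ ℝ⁶, T⁻(η) = (η_u − η_qt)² + (1/2)(η_p + η_qt)² + (1/2)(η_pt − η_q − η_ut)² + (1/2)(η_q + η_ut)² + (1/2) η_ut² , and in particular T⁻(η) ≥ 0. -/
/-- The boundary quadratic form `T⁻` at right endpoints (outward normal `n = 1`)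
in the error analysis of the semi-discrete HDG method for the linearized
fifth-order KdV equation. -/
noncomputable def Tminus (β tsu tsq tsp tru trq trp ηu ηq ηp ηut ηqt ηpt : ℝ) : ℝ :=
  (-β * tsu) * ηu ^ 2 + (β * trq) * ηq ^ 2 + (-β / 2) * ηp ^ 2
    + (-1 / (2 * β) - β * tsu) * ηut ^ 2 + (-1 / (2 * β) + β * trq) * ηqt ^ 2
    + (-β / 2) * ηpt ^ 2
    + (-tru + tsu * tru) * (ηu * ηut) + (-tsq + tsq * trq) * (ηq * ηqt)
    + (trp + tsp * trp) * (ηp * ηpt)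
    + (-β * tsq + β * tru) * (ηu * ηq) + (-β * tsp) * (ηu * ηp)
    + (β * trp) * (ηp * ηq)
    + (1 - trq + tsq * tru) * (ηq * ηut) + (-tsu + tsu * trq) * (ηu * ηqt)
    + (1 - tsp + tsp * trq) * (ηp * ηqt) + (trq + tsq * trp) * (ηq * ηpt)
    + (tru + tsu * trp) * (ηu * ηpt) + (-trp + tsp * tru) * (ηp * ηut)
    + (1 / β - β * tsp) * (ηut * ηpt) + (-β * tsq + β * tru) * (ηqt * ηut)
    + (β * trp) * (ηqt * ηpt)

theorem Tminus_eq_sum_sq (ηu ηq ηp ηut ηqt ηpt : ℝ) :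
    Tminus (-1) 1 0 0 0 (-1) 0 ηu ηq ηp ηut ηqt ηpt
      = (ηu - ηqt) ^ 2 + (1 / 2) * (ηp + ηqt) ^ 2
        + (1 / 2) * (ηpt - ηq - ηut) ^ 2 + (1 / 2) * (ηq + ηut) ^ 2
        + (1 / 2) * ηut ^ 2 := by
  unfold Tminus
  ring

theorem Tminus_nonneg (ηu ηq ηp ηut ηqt ηpt : ℝ) :
    0 ≤ Tminus (-1) 1 0 0 0 (-1) 0 ηu ηq ηp ηut ηqt ηpt := by
  rw [Tminus_eq_sum_sq]
  positivity

theorem stmt_4_general (β tsu tsq tsp tru trq trp : ℝ)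
    (hβval : β = -1) (htsu : tsu = 1) (htrq : trq = -1)
    (htsq : tsq = 0) (htsp : tsp = 0) (htru : tru = 0) (htrp : trp = 0) :
    ∀ ηu ηq ηp ηut ηqt ηpt : ℝ,
      Tminus β tsu tsq tsp tru trq trp ηu ηq ηp ηut ηqt ηpt
        = (ηu - ηqt) ^ 2 + (1 / 2) * (ηp + ηqt) ^ 2
          + (1 / 2) * (ηpt - ηq - ηut) ^ 2 + (1 / 2) * (ηq + ηut) ^ 2
          + (1 / 2) * ηut ^ 2
      ∧ 0 ≤ Tminus β tsu tsq tsp tru trq trp ηu ηq ηp ηut ηqt ηpt := by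
  subst hβval htsu htrq htsq htsp htru htrp
  intro ηu ηq ηp ηut ηqt ηpt
  exact ⟨Tminus_eq_sum_sq .., Tminus_nonneg ..⟩

theorem stmt_4 (β tsu tsq tsp tru trq trp : ℝ) (hβ : β ≠ 0)
    (hβval : β = -1) (htsu : tsu = 1) (htrq : trq = -1)
    (htsq : tsq = 0) (htsp : tsp = 0) (htru : tru = 0) (htrp : trp = 0) :
    ∀ ηu ηq ηp ηut ηqt ηpt : ℝ,
      Tminus β tsu tsq tsp tru trq trp ηu ηq ηp ηut ηqt ηpt
        = (ηu - ηqt) ^ 2 + (1 / 2) * (ηp + ηqt) ^ 2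
          + (1 / 2) * (ηpt - ηq - ηut) ^ 2 + (1 / 2) * (ηq + ηut) ^ 2
          + (1 / 2) * ηut ^ 2
      ∧ 0 ≤ Tminus β tsu tsq tsp tru trq trp ηu ηq ηp ηut ηqt ηpt :=
  stmt_4_general β tsu tsq tsp tru trq trp hβval htsu htrq htsq htsp htru htrp
end

section
/- Let L > 0 and γ, β ∈ ℝ. Let Ψ_u, Ψ_q, Ψ_p, Ψ_r, Ψ_s : ℝ → ℝ be continuously differentiable on [0, L] with Ψ_ω(0) = Ψ_ω(L) for each ω ∈ {u, q, p, r, s}, and let η_u, η_q, η_p, η_r, η_s : [0, L] → ℝ be continuous functions such that on [0, L]: Ψ_u' − Ψ_q = η_s, Ψ_q' − Ψ_p = −η_r, Ψ_p' − Ψ_r = η_p, Ψ_r' − Ψ_s = −η_q, and β Ψ_s' + γ Ψ_u = η_u. Then γ ∫₀ᴸ Ψ_u(x)² dx = ∫₀ᴸ ( β η_s(x) Ψ_s(x) + β η_r(x) Ψ_r(x) + β η_p(x) Ψ_p(x) + β η_q(x) Ψ_q(x) + η_u(x) Ψ_u(x) ) dx. -/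
/-!
Multiplying the five equations by `β Ψs, -β Ψr, β Ψp, -β Ψq, Ψu` and adding, every term containing
a derivative combines into `β E'` for the energy `E = Ψu Ψs - Ψq Ψr + Ψp² / 2`, and what is left
is `γ Ψu²` on one side and the right-hand integrand on the other. Since `E` takes the same value at
`0` and `L`, the integral of `E'` vanishes.
-/

open Set intervalIntegral

theorem intervalIntegral.integral_eq_zero_of_hasDerivWithinAt_of_eq {E : Type*}
    [NormedAddCommGroup E] [NormedSpace ℝ E] [CompleteSpace E] {f f' : ℝ → E} {a b : ℝ}
    (hab : a ≤ b) (hf : ∀ x ∈ Icc a b, HasDerivWithinAt f (f' x) (Icc a b) x)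
    (hf' : IntervalIntegrable f' MeasureTheory.volume a b) (hfab : f a = f b) :
    ∫ x in a..b, f' x = 0 := by
  rw [integral_eq_sub_of_hasDerivAt_of_le hab (fun x hx => (hf x hx).continuousWithinAt)
    (fun x hx => (hf x (Ioo_subset_Icc_self hx)).hasDerivAt (Icc_mem_nhds hx.1 hx.2)) hf',
    hfab, sub_self]

noncomputable def dualEnergy (u q p r s : ℝ → ℝ) (x : ℝ) : ℝ :=
  u x * s x - q x * r x + p x ^ 2 / 2

theorem HasDerivWithinAt.dualEnergy {u q p r s : ℝ → ℝ} {u' q' p' r' s' : ℝ} {t : Set ℝ}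
    {x : ℝ} (hu : HasDerivWithinAt u u' t x) (hq : HasDerivWithinAt q q' t x)
    (hp : HasDerivWithinAt p p' t x) (hr : HasDerivWithinAt r r' t x)
    (hs : HasDerivWithinAt s s' t x) :
    HasDerivWithinAt (dualEnergy u q p r s)
      (u' * s x + u x * s' - (q' * r x + q x * r') + p x * p') t x :=
  (((hu.mul hs).sub (hq.mul hr)).add ((hp.pow 2).div_const 2)).congr_deriv (by ring)

theorem stmt_11_general (L γ β : ℝ) (hL : 0 < L)
    (Ψu Ψq Ψp Ψr Ψs DΨu DΨq DΨp DΨr DΨs : ℝ → ℝ)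
    (ηu ηq ηp ηr ηs : ℝ → ℝ)
    (hΨu : ∀ x ∈ Set.Icc 0 L, HasDerivWithinAt Ψu (DΨu x) (Set.Icc 0 L) x)
    (hΨq : ∀ x ∈ Set.Icc 0 L, HasDerivWithinAt Ψq (DΨq x) (Set.Icc 0 L) x)
    (hΨp : ∀ x ∈ Set.Icc 0 L, HasDerivWithinAt Ψp (DΨp x) (Set.Icc 0 L) x)
    (hΨr : ∀ x ∈ Set.Icc 0 L, HasDerivWithinAt Ψr (DΨr x) (Set.Icc 0 L) x)
    (hΨs : ∀ x ∈ Set.Icc 0 L, HasDerivWithinAt Ψs (DΨs x) (Set.Icc 0 L) x)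
    (hηu : ContinuousOn ηu (Set.Icc 0 L)) (hηq : ContinuousOn ηq (Set.Icc 0 L))
    (hηp : ContinuousOn ηp (Set.Icc 0 L)) (hηr : ContinuousOn ηr (Set.Icc 0 L))
    (hηs : ContinuousOn ηs (Set.Icc 0 L))
    (hperu : Ψu 0 = Ψu L) (hperq : Ψq 0 = Ψq L) (hperp : Ψp 0 = Ψp L)
    (hperr : Ψr 0 = Ψr L) (hpers : Ψs 0 = Ψs L)
    (heq1 : ∀ x ∈ Set.Icc 0 L, DΨu x - Ψq x = ηs x)
    (heq2 : ∀ x ∈ Set.Icc 0 L, DΨq x - Ψp x = -ηr x)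
    (heq3 : ∀ x ∈ Set.Icc 0 L, DΨp x - Ψr x = ηp x)
    (heq4 : ∀ x ∈ Set.Icc 0 L, DΨr x - Ψs x = -ηq x)
    (heq5 : ∀ x ∈ Set.Icc 0 L, β * DΨs x + γ * Ψu x = ηu x) :
    γ * ∫ x in (0:ℝ)..L, (Ψu x) ^ 2 =
      ∫ x in (0:ℝ)..L,
        (β * ηs x * Ψs x + β * ηr x * Ψr x + β * ηp x * Ψp x
          + β * ηq x * Ψq x + ηu x * Ψu x) := by
  set g := fun x => β * ηs x * Ψs x + β * ηr x * Ψr x + β * ηp x * Ψp x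
    + β * ηq x * Ψq x + ηu x * Ψu x
  have hu : ContinuousOn Ψu (Icc 0 L) := fun x hx => (hΨu x hx).continuousWithinAt
  have hq : ContinuousOn Ψq (Icc 0 L) := fun x hx => (hΨq x hx).continuousWithinAt
  have hp : ContinuousOn Ψp (Icc 0 L) := fun x hx => (hΨp x hx).continuousWithinAt
  have hr : ContinuousOn Ψr (Icc 0 L) := fun x hx => (hΨr x hx).continuousWithinAt
  have hs : ContinuousOn Ψs (Icc 0 L) := fun x hx => (hΨs x hx).continuousWithinAt
  have hg : ContinuousOn g (Icc 0 L) := by simp only [g]; fun_prop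
  have hΨu2 : ContinuousOn (fun x => γ * Ψu x ^ 2) (Icc 0 L) := by fun_prop
  have hdual : ∀ x ∈ Icc 0 L, HasDerivWithinAt (fun x => β * dualEnergy Ψu Ψq Ψp Ψr Ψs x)
      (g x - γ * Ψu x ^ 2) (Icc 0 L) x := fun x hx =>
    (((hΨu x hx).dualEnergy (hΨq x hx) (hΨp x hx) (hΨr x hx) (hΨs x hx)).const_mul β).congr_deriv
      (by linear_combination (β * Ψs x) * heq1 x hx - (β * Ψr x) * heq2 x hx
        + (β * Ψp x) * heq3 x hx - (β * Ψq x) * heq4 x hx + Ψu x * heq5 x hx)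
  have hzero := integral_eq_zero_of_hasDerivWithinAt_of_eq hL.le hdual
    ((hg.sub hΨu2).intervalIntegrable_of_Icc hL.le)
    (by simp only [dualEnergy, hperu, hperq, hperp, hperr, hpers])
  rw [integral_sub (hg.intervalIntegrable_of_Icc hL.le) (hΨu2.intervalIntegrable_of_Icc hL.le),
    integral_const_mul] at hzero
  linear_combination -hzero

theorem stmt_11 (L γ β : ℝ) (hL : 0 < L)
    (Ψu Ψq Ψp Ψr Ψs DΨu DΨq DΨp DΨr DΨs : ℝ → ℝ)
    (ηu ηq ηp ηr ηs : ℝ → ℝ)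
    (hΨu : ∀ x ∈ Set.Icc 0 L, HasDerivWithinAt Ψu (DΨu x) (Set.Icc 0 L) x)
    (hΨq : ∀ x ∈ Set.Icc 0 L, HasDerivWithinAt Ψq (DΨq x) (Set.Icc 0 L) x)
    (hΨp : ∀ x ∈ Set.Icc 0 L, HasDerivWithinAt Ψp (DΨp x) (Set.Icc 0 L) x)
    (hΨr : ∀ x ∈ Set.Icc 0 L, HasDerivWithinAt Ψr (DΨr x) (Set.Icc 0 L) x)
    (hΨs : ∀ x ∈ Set.Icc 0 L, HasDerivWithinAt Ψs (DΨs x) (Set.Icc 0 L) x)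
    (hDu : ContinuousOn DΨu (Set.Icc 0 L)) (hDq : ContinuousOn DΨq (Set.Icc 0 L))
    (hDp : ContinuousOn DΨp (Set.Icc 0 L)) (hDr : ContinuousOn DΨr (Set.Icc 0 L))
    (hDs : ContinuousOn DΨs (Set.Icc 0 L))
    (hηu : ContinuousOn ηu (Set.Icc 0 L)) (hηq : ContinuousOn ηq (Set.Icc 0 L))
    (hηp : ContinuousOn ηp (Set.Icc 0 L)) (hηr : ContinuousOn ηr (Set.Icc 0 L))
    (hηs : ContinuousOn ηs (Set.Icc 0 L))
    (hperu : Ψu 0 = Ψu L) (hperq : Ψq 0 = Ψq L) (hperp : Ψp 0 = Ψp L)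
    (hperr : Ψr 0 = Ψr L) (hpers : Ψs 0 = Ψs L)
    (heq1 : ∀ x ∈ Set.Icc 0 L, DΨu x - Ψq x = ηs x)
    (heq2 : ∀ x ∈ Set.Icc 0 L, DΨq x - Ψp x = -ηr x)
    (heq3 : ∀ x ∈ Set.Icc 0 L, DΨp x - Ψr x = ηp x)
    (heq4 : ∀ x ∈ Set.Icc 0 L, DΨr x - Ψs x = -ηq x)
    (heq5 : ∀ x ∈ Set.Icc 0 L, β * DΨs x + γ * Ψu x = ηu x) :
    γ * ∫ x in (0:ℝ)..L, (Ψu x) ^ 2 =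
      ∫ x in (0:ℝ)..L,
        (β * ηs x * Ψs x + β * ηr x * Ψr x + β * ηp x * Ψp x
          + β * ηq x * Ψq x + ηu x * Ψu x) :=
  stmt_11_general L γ β hL Ψu Ψq Ψp Ψr Ψs DΨu DΨq DΨp DΨr DΨs ηu ηq ηp ηr ηs hΨu hΨq hΨp hΨr hΨs hηu
    hηq hηp hηr hηs hperu hperq hperp hperr hpers heq1 heq2 heq3 heq4 heq5
end

section
/- Let L > 0, γ > 0, and β ≠ 0. There exists a constant C > 0, depending only on L, γ and β, with the following property: whenever Ψ_u, Ψ_q, Ψ_p, Ψ_r, Ψ_s : ℝ → ℝ are continuously differentiable on [0, L] with Ψ_ω(0) = Ψ_ω(L) for each ω ∈ {u, q, p, r, s}, and η_u, η_q, η_p, η_r, η_s : [0, L] → ℝ are continuous functions such that on [0, L]: Ψ_u' − Ψ_q = η_s, Ψ_q' − Ψ_p = −η_r, Ψ_p' − Ψ_r = η_p, Ψ_r' − Ψ_s = −η_q, and β Ψ_s' + γ Ψ_u = η_u, one has Σ_{ω ∈ {u,q,p,r,s}} ( (∫₀ᴸ Ψ_ω(x)² dx)^{1/2} + (∫₀ᴸ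 Ψ_ω'(x)² dx)^{1/2} ) ≤ C · Σ_{ω ∈ {u,q,p,r,s}} (∫₀ᴸ η_ω(x)² dx)^{1/2}. -/
/-!
Energy estimate plus a cascade of Poincaré inequalities. Testing the last equation with `Ψu`,
periodicity kills the derivative of `Ψs Ψu - Ψr Ψq + Ψp² / 2`, leaving
`γ ‖Ψu‖² = (ηu, Ψu) + β ((ηs, Ψs) + (ηq, Ψq) + (ηr, Ψr) + (ηp, Ψp))`.
Each of the first four equations reads `F' = f ± η` with `F` periodic, so `∫ f = ∓ ∫ η`, and a
Poincaré–Wirtinger inequality gives `‖f‖ ≤ ‖η‖ + L ‖f'‖`; starting from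
`|β| ‖Ψs'‖ ≤ ‖ηu‖ + γ ‖Ψu‖` this bounds every H¹ norm by `O(‖η‖ + ‖Ψu‖)`. Fed into the energy
identity, this yields a quadratic inequality in `‖Ψu‖`, whose absorption closes the argument.
-/

open Set intervalIntegral Asymptotics

noncomputable def l2Norm (L : ℝ) (f : ℝ → ℝ) : ℝ := √(∫ x in (0:ℝ)..L, f x ^ 2)

section L2Norm

variable {L : ℝ} {f g f' : ℝ → ℝ}

lemma l2Norm_nonneg (L : ℝ) (f : ℝ → ℝ) : 0 ≤ l2Norm L f := Real.sqrt_nonneg _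

lemma sq_l2Norm (hL : 0 ≤ L) (f : ℝ → ℝ) : l2Norm L f ^ 2 = ∫ x in (0:ℝ)..L, f x ^ 2 :=
  Real.sq_sqrt (integral_nonneg hL fun _ _ => sq_nonneg _)

lemma l2Norm_congr (hL : 0 ≤ L) (h : EqOn f g (Icc 0 L)) : l2Norm L f = l2Norm L g := by
  rw [l2Norm, l2Norm, integral_congr fun x hx => ?_]
  rw [uIcc_of_le hL] at hx
  simp only [h hx]

lemma l2Norm_const_mul (c : ℝ) (f : ℝ → ℝ) :
    l2Norm L (fun x => c * f x) = |c| * l2Norm L f := by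
  rw [l2Norm, l2Norm, ← Real.sqrt_sq_eq_abs, ← Real.sqrt_mul (sq_nonneg c), ← integral_const_mul]
  simp only [mul_pow]

lemma l2Norm_neg (f : ℝ → ℝ) : l2Norm L (-f) = l2Norm L f := by
  simp only [l2Norm, Pi.neg_apply, neg_sq]

lemma l2Norm_abs (f : ℝ → ℝ) : l2Norm L (fun x => |f x|) = l2Norm L f := by
  simp only [l2Norm, sq_abs]

lemma l2Norm_one : l2Norm L (fun _ => 1) = √L := by
  simp [l2Norm]

lemma integral_add_sq (hL : 0 ≤ L) (hf : ContinuousOn f (Icc 0 L))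
    (hg : ContinuousOn g (Icc 0 L)) :
    ∫ x in (0:ℝ)..L, (f x + g x) ^ 2 =
      (∫ x in (0:ℝ)..L, f x ^ 2) + 2 * (∫ x in (0:ℝ)..L, f x * g x) +
        ∫ x in (0:ℝ)..L, g x ^ 2 := by
  have hi : ∀ {φ : ℝ → ℝ}, ContinuousOn φ (Icc 0 L) →
      IntervalIntegrable φ MeasureTheory.volume 0 L :=
    fun hφ => hφ.intervalIntegrable_of_Icc hL
  simp only [add_sq, mul_assoc]
  rw [integral_add (hi (by fun_prop)) (hi (by fun_prop)), integral_add (hi (by fun_prop))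
    (hi (by fun_prop)), integral_const_mul]

lemma abs_integral_mul_le_l2Norm_mul (hL : 0 ≤ L) (hf : ContinuousOn f (Icc 0 L))
    (hg : ContinuousOn g (Icc 0 L)) :
    |∫ x in (0:ℝ)..L, f x * g x| ≤ l2Norm L f * l2Norm L g := by
  have hquad : ∀ t : ℝ, 0 ≤ l2Norm L g ^ 2 * (t * t) +
      (2 * ∫ x in (0:ℝ)..L, f x * g x) * t + l2Norm L f ^ 2 := fun t => by
    have := integral_add_sq hL hf (g := fun x => t * g x) (continuousOn_const.mul hg)
    simp only [mul_pow, mul_left_comm _ t, integral_const_mul] at this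
    rw [sq_l2Norm hL, sq_l2Norm hL]
    have hnonneg : 0 ≤ ∫ x in (0:ℝ)..L, (f x + t * g x) ^ 2 :=
      integral_nonneg hL fun x _ => sq_nonneg _
    linarith [sq t]
  have hdisc := discrim_le_zero hquad
  rw [discrim] at hdisc
  exact abs_le_of_sq_le_sq (by nlinarith) (by positivity [l2Norm_nonneg L f, l2Norm_nonneg L g])

lemma l2Norm_add_le (hL : 0 ≤ L) (hf : ContinuousOn f (Icc 0 L))
    (hg : ContinuousOn g (Icc 0 L)) :
    l2Norm L (fun x => f x + g x) ≤ l2Norm L f + l2Norm L g := by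
  have hcs := (le_abs_self _).trans (abs_integral_mul_le_l2Norm_mul hL hf hg)
  refine Real.sqrt_le_iff.2 ⟨by positivity [l2Norm_nonneg L f, l2Norm_nonneg L g], ?_⟩
  rw [integral_add_sq hL hf hg, ← sq_l2Norm hL, ← sq_l2Norm hL]
  nlinarith

lemma abs_integral_le_sqrt_mul_l2Norm (hL : 0 ≤ L) (hf : ContinuousOn f (Icc 0 L)) :
    |∫ x in (0:ℝ)..L, f x| ≤ √L * l2Norm L f := by
  simpa [l2Norm_one] using
    abs_integral_mul_le_l2Norm_mul hL continuousOn_const hf (f := fun _ => 1)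

lemma l2Norm_le_sqrt_mul_of_abs_le (hL : 0 ≤ L) {M : ℝ} (hM : 0 ≤ M)
    (hf : ContinuousOn f (Icc 0 L)) (hbound : ∀ x ∈ Icc 0 L, |f x| ≤ M) :
    l2Norm L f ≤ √L * M := by
  rw [← Real.sqrt_sq hM, ← Real.sqrt_mul hL]
  refine Real.sqrt_le_sqrt ?_
  calc ∫ x in (0:ℝ)..L, f x ^ 2 ≤ ∫ x in (0:ℝ)..L, M ^ 2 :=
        integral_mono_on hL ((hf.pow 2).intervalIntegrable_of_Icc hL) intervalIntegrable_const
          fun x hx => sq_le_sq' (abs_le.1 (hbound x hx)).1 (abs_le.1 (hbound x hx)).2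
    _ = L * M ^ 2 := by simp

lemma integral_eq_sub_of_hasDerivWithinAt_Icc {a b c d : ℝ}
    (hderiv : ∀ x ∈ Icc a b, HasDerivWithinAt f (f' x) (Icc a b) x)
    (hf' : ContinuousOn f' (Icc a b)) (hc : c ∈ Icc a b) (hd : d ∈ Icc a b) :
    ∫ x in c..d, f' x = f d - f c := by
  have hsub : uIcc c d ⊆ Icc a b := uIcc_subset_Icc hc hd
  refine integral_eq_sub_of_hasDeriv_right
    (fun x hx => (hderiv x (hsub hx)).continuousWithinAt.mono hsub) (fun x hx => ?_)
    ((hf'.mono hsub).intervalIntegrable)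
  have hx' : x ∈ Ioo a b := Ioo_subset_Ioo (le_min hc.1 hd.1) (max_le hc.2 hd.2) hx
  exact ((hderiv x (Ioo_subset_Icc_self hx')).hasDerivAt
    (Icc_mem_nhds hx'.1 hx'.2)).hasDerivWithinAt

/-- Poincaré–Wirtinger, through a point where `f` takes its mean value. -/
lemma l2Norm_le_abs_integral_div_add (hL : 0 < L)
    (hderiv : ∀ x ∈ Icc 0 L, HasDerivWithinAt f (f' x) (Icc 0 L) x)
    (hf' : ContinuousOn f' (Icc 0 L)) :
    l2Norm L f ≤ |∫ x in (0:ℝ)..L, f x| / √L + L * l2Norm L f' := by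
  have hf : ContinuousOn f (Icc 0 L) := fun x hx => (hderiv x hx).continuousWithinAt
  obtain ⟨c, hc, hfc⟩ := exists_eq_interval_average hL.ne (by rwa [uIcc_of_le hL.le])
  rw [interval_average_eq_div, sub_zero] at hfc
  have hc' : c ∈ Icc 0 L := by
    rw [uIoo_of_le hL.le] at hc
    exact Ioo_subset_Icc_self hc
  have hpointwise : ∀ x ∈ Icc 0 L,
      |f x| ≤ |∫ x in (0:ℝ)..L, f x| / L + √L * l2Norm L f' := by
    intro x hx
    have hvar : |∫ t in c..x, f' t| ≤ √L * l2Norm L f' := calc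
      |∫ t in c..x, f' t| ≤ |∫ t in c..x, (|f' t|)| := by
          simpa only [Real.norm_eq_abs] using norm_integral_le_abs_integral_norm (f := f')
      _ ≤ |∫ t in (0:ℝ)..L, (|f' t|)| := abs_integral_mono_interval
          (by
            simp only [uIoc_of_le hL.le]
            exact Ioc_subset_Ioc (le_min hc'.1 hx.1) (max_le hc'.2 hx.2))
          (Filter.Eventually.of_forall fun _ => abs_nonneg _)
          ((hf'.abs).intervalIntegrable_of_Icc hL.le)
      _ ≤ √L * l2Norm L f' := by
          simpa only [l2Norm_abs] using abs_integral_le_sqrt_mul_l2Norm hL.le hf'.abs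
    rw [← sub_add_cancel (f x) (f c),
      ← integral_eq_sub_of_hasDerivWithinAt_Icc hderiv hf' hc' hx, hfc]
    refine (abs_add_le _ _).trans ?_
    rw [abs_div, abs_of_pos hL]
    linarith
  have hsqrt : √L * √L = L := Real.mul_self_sqrt hL.le
  have hsL : 0 < √L := Real.sqrt_pos.2 hL
  calc l2Norm L f ≤ √L * (|∫ x in (0:ℝ)..L, f x| / L + √L * l2Norm L f') :=
        l2Norm_le_sqrt_mul_of_abs_le hL.le (by positivity [l2Norm_nonneg L f']) hf hpointwise
    _ = |∫ x in (0:ℝ)..L, f x| / √L + L * l2Norm L f' := by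
        rw [mul_add, ← mul_assoc, hsqrt, mul_div_assoc']
        congr 1
        rw [div_eq_div_iff hL.ne' hsL.ne', mul_right_comm, hsqrt, mul_comm]

lemma integral_eq_zero_of_hasDerivWithinAt_of_eq (hL : 0 ≤ L)
    (hderiv : ∀ x ∈ Icc 0 L, HasDerivWithinAt f (f' x) (Icc 0 L) x)
    (hf' : ContinuousOn f' (Icc 0 L)) (hper : f 0 = f L) :
    ∫ x in (0:ℝ)..L, f' x = 0 := by
  rw [integral_eq_sub_of_hasDerivWithinAt_Icc hderiv hf' (left_mem_Icc.2 hL)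
    (right_mem_Icc.2 hL), hper, sub_self]

lemma l2Norm_le_of_eqOn_add (hL : 0 ≤ L) {F : ℝ → ℝ} (hf : ContinuousOn f (Icc 0 L))
    (hg : ContinuousOn g (Icc 0 L)) (heq : ∀ x ∈ Icc 0 L, F x = f x + g x) :
    l2Norm L F ≤ l2Norm L f + l2Norm L g :=
  (l2Norm_congr hL heq).trans_le (l2Norm_add_le hL hf hg)

/-- Periodicity of `F` gives `∫ f = -∫ h`, which feeds the Poincaré–Wirtinger inequality. -/
lemma l2Norm_le_of_hasDerivWithinAt_eq_add (hL : 0 < L) {F F' h : ℝ → ℝ}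
    (hF : ∀ x ∈ Icc 0 L, HasDerivWithinAt F (F' x) (Icc 0 L) x)
    (hF' : ContinuousOn F' (Icc 0 L)) (hper : F 0 = F L)
    (hf : ∀ x ∈ Icc 0 L, HasDerivWithinAt f (f' x) (Icc 0 L) x)
    (hf' : ContinuousOn f' (Icc 0 L)) (hh : ContinuousOn h (Icc 0 L))
    (heq : ∀ x ∈ Icc 0 L, F' x = f x + h x) :
    l2Norm L f ≤ l2Norm L h + L * l2Norm L f' := by
  have hfc : ContinuousOn f (Icc 0 L) := fun x hx => (hf x hx).continuousWithinAt
  have hmean : ∫ x in (0:ℝ)..L, f x = -∫ x in (0:ℝ)..L, h x := by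
    have h0 := integral_eq_zero_of_hasDerivWithinAt_of_eq hL.le hF hF' hper
    rw [integral_congr fun x hx => heq x (by rwa [uIcc_of_le hL.le] at hx),
      integral_add (hfc.intervalIntegrable_of_Icc hL.le)
        (hh.intervalIntegrable_of_Icc hL.le)] at h0
    linarith
  have hsL : 0 < √L := Real.sqrt_pos.2 hL
  have hmean_le : |∫ x in (0:ℝ)..L, f x| / √L ≤ l2Norm L h := by
    rw [hmean, abs_neg, div_le_iff₀' hsL]
    exact abs_integral_le_sqrt_mul_l2Norm hL.le hh
  linarith [l2Norm_le_abs_integral_div_add hL hf hf']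

end L2Norm

lemma le_mul_of_mul_sq_le {γ x e a b : ℝ} (hγ : 0 < γ) (he : 0 ≤ e) (ha : 0 ≤ a) (hb : 0 ≤ b)
    (h : γ * x ^ 2 ≤ a * e * x + b * e ^ 2) : x ≤ ((a + b) / γ + 1) * e := by
  have hab : 0 ≤ (a + b) / γ := by positivity
  rcases le_or_gt x e with hxe | hex
  · nlinarith
  · have hx : 0 < x := he.trans_lt hex
    have hγx : γ * x ≤ (a + b) * e := le_of_mul_le_mul_right
      (by nlinarith [mul_le_mul_of_nonneg_left hex.le (mul_nonneg hb he)]) hx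
    have : x ≤ (a + b) / γ * e := by rw [div_mul_eq_mul_div, le_div_iff₀ hγ]; linarith
    rw [add_mul, one_mul]
    linarith

lemma isBigO_of_le_add {α : Type*} {l : Filter α} {f g h k : α → ℝ}
    (hle : ∀ a, f a ≤ g a + h a) (hg : g =O[l] k) (hh : h =O[l] k) (hf : ∀ a, 0 ≤ f a) :
    f =O[l] k :=
  (isBigO_of_le l fun a => by
    rw [Real.norm_of_nonneg (hf a)]; exact (hle a).trans (le_abs_self _)).trans (hg.add hh)

structure DualSolution (L γ β : ℝ) where
  (Ψu Ψq Ψp Ψr Ψs DΨu DΨq DΨp DΨr DΨs ηu ηq ηp ηr ηs : ℝ → ℝ)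
  hasDerivWithinAt_Ψu : ∀ x ∈ Icc 0 L, HasDerivWithinAt Ψu (DΨu x) (Icc 0 L) x
  hasDerivWithinAt_Ψq : ∀ x ∈ Icc 0 L, HasDerivWithinAt Ψq (DΨq x) (Icc 0 L) x
  hasDerivWithinAt_Ψp : ∀ x ∈ Icc 0 L, HasDerivWithinAt Ψp (DΨp x) (Icc 0 L) x
  hasDerivWithinAt_Ψr : ∀ x ∈ Icc 0 L, HasDerivWithinAt Ψr (DΨr x) (Icc 0 L) x
  hasDerivWithinAt_Ψs : ∀ x ∈ Icc 0 L, HasDerivWithinAt Ψs (DΨs x) (Icc 0 L) x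
  continuousOn_DΨu : ContinuousOn DΨu (Icc 0 L)
  continuousOn_DΨq : ContinuousOn DΨq (Icc 0 L)
  continuousOn_DΨp : ContinuousOn DΨp (Icc 0 L)
  continuousOn_DΨr : ContinuousOn DΨr (Icc 0 L)
  continuousOn_DΨs : ContinuousOn DΨs (Icc 0 L)
  continuousOn_ηu : ContinuousOn ηu (Icc 0 L)
  continuousOn_ηq : ContinuousOn ηq (Icc 0 L)
  continuousOn_ηp : ContinuousOn ηp (Icc 0 L)
  continuousOn_ηr : ContinuousOn ηr (Icc 0 L)
  continuousOn_ηs : ContinuousOn ηs (Icc 0 L)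
  Ψu_zero : Ψu 0 = Ψu L
  Ψq_zero : Ψq 0 = Ψq L
  Ψp_zero : Ψp 0 = Ψp L
  Ψr_zero : Ψr 0 = Ψr L
  Ψs_zero : Ψs 0 = Ψs L
  eq_ηs : ∀ x ∈ Icc 0 L, DΨu x - Ψq x = ηs x
  eq_ηr : ∀ x ∈ Icc 0 L, DΨq x - Ψp x = -ηr x
  eq_ηp : ∀ x ∈ Icc 0 L, DΨp x - Ψr x = ηp x
  eq_ηq : ∀ x ∈ Icc 0 L, DΨr x - Ψs x = -ηq x
  eq_ηu : ∀ x ∈ Icc 0 L, β * DΨs x + γ * Ψu x = ηu x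

namespace DualSolution

variable {L γ β : ℝ} (S : DualSolution L γ β)

noncomputable def dataNorm : ℝ :=
  l2Norm L S.ηu + l2Norm L S.ηq + l2Norm L S.ηp + l2Norm L S.ηr + l2Norm L S.ηs

noncomputable def h1Norm : ℝ :=
  (l2Norm L S.Ψu + l2Norm L S.DΨu) + (l2Norm L S.Ψq + l2Norm L S.DΨq) +
    (l2Norm L S.Ψp + l2Norm L S.DΨp) + (l2Norm L S.Ψr + l2Norm L S.DΨr) +
    (l2Norm L S.Ψs + l2Norm L S.DΨs)

lemma continuousOn_Ψu : ContinuousOn S.Ψu (Icc 0 L) :=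
  fun x hx => (S.hasDerivWithinAt_Ψu x hx).continuousWithinAt

lemma continuousOn_Ψq : ContinuousOn S.Ψq (Icc 0 L) :=
  fun x hx => (S.hasDerivWithinAt_Ψq x hx).continuousWithinAt

lemma continuousOn_Ψp : ContinuousOn S.Ψp (Icc 0 L) :=
  fun x hx => (S.hasDerivWithinAt_Ψp x hx).continuousWithinAt

lemma continuousOn_Ψr : ContinuousOn S.Ψr (Icc 0 L) :=
  fun x hx => (S.hasDerivWithinAt_Ψr x hx).continuousWithinAt

lemma continuousOn_Ψs : ContinuousOn S.Ψs (Icc 0 L) :=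
  fun x hx => (S.hasDerivWithinAt_Ψs x hx).continuousWithinAt

lemma abs_mul_l2Norm_DΨs_le (hL : 0 ≤ L) (hγ : 0 ≤ γ) :
    |β| * l2Norm L S.DΨs ≤ l2Norm L S.ηu + γ * l2Norm L S.Ψu := by
  calc |β| * l2Norm L S.DΨs = l2Norm L (fun x => β * S.DΨs x) :=
        (l2Norm_const_mul _ _).symm
    _ ≤ l2Norm L S.ηu + l2Norm L (fun x => -γ * S.Ψu x) :=
        l2Norm_le_of_eqOn_add hL S.continuousOn_ηu (continuousOn_const.mul S.continuousOn_Ψu)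
          fun x hx => by linarith [S.eq_ηu x hx]
    _ = l2Norm L S.ηu + γ * l2Norm L S.Ψu := by
        rw [l2Norm_const_mul, abs_neg, abs_of_nonneg hγ]

lemma l2Norm_Ψs_le (hL : 0 < L) : l2Norm L S.Ψs ≤ l2Norm L S.ηq + L * l2Norm L S.DΨs := by
  simpa only [l2Norm_neg] using l2Norm_le_of_hasDerivWithinAt_eq_add hL S.hasDerivWithinAt_Ψr
    S.continuousOn_DΨr S.Ψr_zero S.hasDerivWithinAt_Ψs S.continuousOn_DΨs S.continuousOn_ηq.neg
    fun x hx => sub_eq_iff_eq_add'.1 (S.eq_ηq x hx)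

lemma l2Norm_DΨr_le (hL : 0 ≤ L) : l2Norm L S.DΨr ≤ l2Norm L S.Ψs + l2Norm L S.ηq := by
  simpa only [l2Norm_neg] using l2Norm_le_of_eqOn_add hL S.continuousOn_Ψs S.continuousOn_ηq.neg
    fun x hx => sub_eq_iff_eq_add'.1 (S.eq_ηq x hx)

lemma l2Norm_Ψr_le (hL : 0 < L) : l2Norm L S.Ψr ≤ l2Norm L S.ηp + L * l2Norm L S.DΨr :=
  l2Norm_le_of_hasDerivWithinAt_eq_add hL S.hasDerivWithinAt_Ψp S.continuousOn_DΨp S.Ψp_zero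
    S.hasDerivWithinAt_Ψr S.continuousOn_DΨr S.continuousOn_ηp
    fun x hx => sub_eq_iff_eq_add'.1 (S.eq_ηp x hx)

lemma l2Norm_DΨp_le (hL : 0 ≤ L) : l2Norm L S.DΨp ≤ l2Norm L S.Ψr + l2Norm L S.ηp :=
  l2Norm_le_of_eqOn_add hL S.continuousOn_Ψr S.continuousOn_ηp
    fun x hx => sub_eq_iff_eq_add'.1 (S.eq_ηp x hx)

lemma l2Norm_Ψp_le (hL : 0 < L) : l2Norm L S.Ψp ≤ l2Norm L S.ηr + L * l2Norm L S.DΨp := by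
  simpa only [l2Norm_neg] using l2Norm_le_of_hasDerivWithinAt_eq_add hL S.hasDerivWithinAt_Ψq
    S.continuousOn_DΨq S.Ψq_zero S.hasDerivWithinAt_Ψp S.continuousOn_DΨp S.continuousOn_ηr.neg
    fun x hx => sub_eq_iff_eq_add'.1 (S.eq_ηr x hx)

lemma l2Norm_DΨq_le (hL : 0 ≤ L) : l2Norm L S.DΨq ≤ l2Norm L S.Ψp + l2Norm L S.ηr := by
  simpa only [l2Norm_neg] using l2Norm_le_of_eqOn_add hL S.continuousOn_Ψp S.continuousOn_ηr.neg
    fun x hx => sub_eq_iff_eq_add'.1 (S.eq_ηr x hx)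

lemma l2Norm_Ψq_le (hL : 0 < L) : l2Norm L S.Ψq ≤ l2Norm L S.ηs + L * l2Norm L S.DΨq :=
  l2Norm_le_of_hasDerivWithinAt_eq_add hL S.hasDerivWithinAt_Ψu S.continuousOn_DΨu S.Ψu_zero
    S.hasDerivWithinAt_Ψq S.continuousOn_DΨq S.continuousOn_ηs
    fun x hx => sub_eq_iff_eq_add'.1 (S.eq_ηs x hx)

lemma l2Norm_DΨu_le (hL : 0 ≤ L) : l2Norm L S.DΨu ≤ l2Norm L S.Ψq + l2Norm L S.ηs :=
  l2Norm_le_of_eqOn_add hL S.continuousOn_Ψq S.continuousOn_ηs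
    fun x hx => sub_eq_iff_eq_add'.1 (S.eq_ηs x hx)

lemma energy_identity (hL : 0 ≤ L) :
    γ * ∫ x in (0:ℝ)..L, S.Ψu x ^ 2 = (∫ x in (0:ℝ)..L, S.ηu x * S.Ψu x) +
      β * ((∫ x in (0:ℝ)..L, S.ηs x * S.Ψs x) + (∫ x in (0:ℝ)..L, S.ηq x * S.Ψq x) +
        (∫ x in (0:ℝ)..L, S.ηr x * S.Ψr x) + ∫ x in (0:ℝ)..L, S.ηp x * S.Ψp x) := by
  have := S.continuousOn_Ψu; have := S.continuousOn_Ψq; have := S.continuousOn_Ψp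
  have := S.continuousOn_Ψr; have := S.continuousOn_Ψs
  have := S.continuousOn_DΨu; have := S.continuousOn_DΨq; have := S.continuousOn_DΨp
  have := S.continuousOn_DΨr; have := S.continuousOn_DΨs
  have := S.continuousOn_ηu; have := S.continuousOn_ηq; have := S.continuousOn_ηp
  have := S.continuousOn_ηr; have := S.continuousOn_ηs
  have hprim : ∀ x ∈ Icc 0 L, HasDerivWithinAt
      (fun x => S.Ψs x * S.Ψu x - S.Ψr x * S.Ψq x + S.Ψp x * S.Ψp x / 2)
      ((S.DΨs x * S.Ψu x + S.Ψs x * S.DΨu x) - (S.DΨr x * S.Ψq x + S.Ψr x * S.DΨq x) +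
        (S.DΨp x * S.Ψp x + S.Ψp x * S.DΨp x) / 2) (Icc 0 L) x := fun x hx =>
    (((S.hasDerivWithinAt_Ψs x hx).mul (S.hasDerivWithinAt_Ψu x hx)).sub
      ((S.hasDerivWithinAt_Ψr x hx).mul (S.hasDerivWithinAt_Ψq x hx))).add
      (((S.hasDerivWithinAt_Ψp x hx).mul (S.hasDerivWithinAt_Ψp x hx)).div_const 2)
  have h0 := integral_eq_zero_of_hasDerivWithinAt_of_eq hL hprim (by fun_prop)
    (by simp only [S.Ψu_zero, S.Ψq_zero, S.Ψp_zero, S.Ψr_zero, S.Ψs_zero])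
  have hpointwise : ∀ x ∈ uIcc 0 L, β * ((S.DΨs x * S.Ψu x + S.Ψs x * S.DΨu x) -
      (S.DΨr x * S.Ψq x + S.Ψr x * S.DΨq x) + (S.DΨp x * S.Ψp x + S.Ψp x * S.DΨp x) / 2) =
      (S.ηu x * S.Ψu x - γ * S.Ψu x ^ 2) + β * (S.ηs x * S.Ψs x + S.ηq x * S.Ψq x +
        S.ηr x * S.Ψr x + S.ηp x * S.Ψp x) := fun x hx => by
    rw [uIcc_of_le hL] at hx
    linear_combination S.Ψu x * S.eq_ηu x hx + β * S.Ψs x * S.eq_ηs x hx -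
      β * S.Ψr x * S.eq_ηr x hx + β * S.Ψp x * S.eq_ηp x hx - β * S.Ψq x * S.eq_ηq x hx
  have h1 := congrArg (HMul.hMul β) h0
  rw [mul_zero, ← integral_const_mul, integral_congr hpointwise, integral_add, integral_sub,
    integral_const_mul, integral_const_mul, integral_add, integral_add, integral_add] at h1
  · linarith
  all_goals exact ContinuousOn.intervalIntegrable_of_Icc hL (by fun_prop)

lemma dataNorm_nonneg : 0 ≤ S.dataNorm := by
  unfold dataNorm
  positivity [l2Norm_nonneg L S.ηu, l2Norm_nonneg L S.ηq, l2Norm_nonneg L S.ηp,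
    l2Norm_nonneg L S.ηr, l2Norm_nonneg L S.ηs]

lemma h1Norm_nonneg : 0 ≤ S.h1Norm := by
  unfold h1Norm
  positivity [l2Norm_nonneg L S.Ψu, l2Norm_nonneg L S.Ψq, l2Norm_nonneg L S.Ψp,
    l2Norm_nonneg L S.Ψr, l2Norm_nonneg L S.Ψs, l2Norm_nonneg L S.DΨu, l2Norm_nonneg L S.DΨq,
    l2Norm_nonneg L S.DΨp, l2Norm_nonneg L S.DΨr, l2Norm_nonneg L S.DΨs]

lemma l2Norm_η_le_dataNorm :
    l2Norm L S.ηu ≤ S.dataNorm ∧ l2Norm L S.ηq ≤ S.dataNorm ∧ l2Norm L S.ηp ≤ S.dataNorm ∧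
      l2Norm L S.ηr ≤ S.dataNorm ∧ l2Norm L S.ηs ≤ S.dataNorm := by
  have := l2Norm_nonneg L S.ηu; have := l2Norm_nonneg L S.ηq; have := l2Norm_nonneg L S.ηp
  have := l2Norm_nonneg L S.ηr; have := l2Norm_nonneg L S.ηs
  unfold dataNorm
  refine ⟨?_, ?_, ?_, ?_, ?_⟩ <;> linarith

lemma mul_sq_l2Norm_Ψu_le (hL : 0 ≤ L) :
    γ * l2Norm L S.Ψu ^ 2 ≤ S.dataNorm * (l2Norm L S.Ψu + |β| * S.h1Norm) := by
  obtain ⟨hηu, hηq, hηp, hηr, hηs⟩ := S.l2Norm_η_le_dataNorm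
  have hcs : ∀ {η Ψ : ℝ → ℝ}, ContinuousOn η (Icc 0 L) → ContinuousOn Ψ (Icc 0 L) →
      l2Norm L η ≤ S.dataNorm → |∫ x in (0:ℝ)..L, η x * Ψ x| ≤ S.dataNorm * l2Norm L Ψ :=
    fun hη hΨ hle => (abs_integral_mul_le_l2Norm_mul hL hη hΨ).trans
      (mul_le_mul_of_nonneg_right hle (l2Norm_nonneg _ _))
  have hu := hcs S.continuousOn_ηu S.continuousOn_Ψu hηu
  have hs := abs_le.1 (hcs S.continuousOn_ηs S.continuousOn_Ψs hηs)
  have hq := abs_le.1 (hcs S.continuousOn_ηq S.continuousOn_Ψq hηq)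
  have hr := abs_le.1 (hcs S.continuousOn_ηr S.continuousOn_Ψr hηr)
  have hp := abs_le.1 (hcs S.continuousOn_ηp S.continuousOn_Ψp hηp)
  have hsum : l2Norm L S.Ψs + l2Norm L S.Ψq + l2Norm L S.Ψr + l2Norm L S.Ψp ≤ S.h1Norm := by
    unfold h1Norm
    linarith [l2Norm_nonneg L S.Ψu, l2Norm_nonneg L S.DΨu, l2Norm_nonneg L S.DΨq,
      l2Norm_nonneg L S.DΨp, l2Norm_nonneg L S.DΨr, l2Norm_nonneg L S.DΨs]
  have hB := mul_le_mul_of_nonneg_left hsum S.dataNorm_nonneg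
  rw [sq_l2Norm hL, S.energy_identity hL]
  calc _ ≤ |∫ x in (0:ℝ)..L, S.ηu x * S.Ψu x| + |β| * |(∫ x in (0:ℝ)..L, S.ηs x * S.Ψs x) +
          (∫ x in (0:ℝ)..L, S.ηq x * S.Ψq x) + (∫ x in (0:ℝ)..L, S.ηr x * S.Ψr x) +
          ∫ x in (0:ℝ)..L, S.ηp x * S.Ψp x| :=
        add_le_add (le_abs_self _) ((le_abs_self _).trans (abs_mul _ _).le)
    _ ≤ S.dataNorm * l2Norm L S.Ψu + |β| * (S.dataNorm * S.h1Norm) := by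
        gcongr
        rw [abs_le]
        constructor <;> linarith
    _ = S.dataNorm * (l2Norm L S.Ψu + |β| * S.h1Norm) := by ring

/-- Proved by walking down the chain `DΨs → Ψs → DΨr → Ψr → ⋯ → DΨu`. -/
lemma isBigO_h1Norm (hL : 0 < L) (hγ : 0 ≤ γ) (hβ : β ≠ 0) :
    (fun S : DualSolution L γ β => S.h1Norm) =O[⊤]
      fun S => S.dataNorm + l2Norm L S.Ψu := by
  have hle : ∀ φ : DualSolution L γ β → ℝ → ℝ,
      (∀ S, l2Norm L (φ S) ≤ S.dataNorm + l2Norm L S.Ψu) →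
      (fun S => l2Norm L (φ S)) =O[⊤] fun S => S.dataNorm + l2Norm L S.Ψu :=
    fun φ h => isBigO_of_le _ fun S => by
      rw [Real.norm_of_nonneg (l2Norm_nonneg _ _),
        Real.norm_of_nonneg (add_nonneg S.dataNorm_nonneg (l2Norm_nonneg _ _))]
      exact h S
  have hη := fun S : DualSolution L γ β => S.l2Norm_η_le_dataNorm
  have hηE : ∀ S : DualSolution L γ β, S.dataNorm ≤ S.dataNorm + l2Norm L S.Ψu :=
    fun S => le_add_of_nonneg_right (l2Norm_nonneg _ _)
  have hu := hle Ψu fun S => le_add_of_nonneg_left S.dataNorm_nonneg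
  have hηu := hle ηu fun S => (hη S).1.trans (hηE S)
  have hηq := hle ηq fun S => (hη S).2.1.trans (hηE S)
  have hηp := hle ηp fun S => (hη S).2.2.1.trans (hηE S)
  have hηr := hle ηr fun S => (hη S).2.2.2.1.trans (hηE S)
  have hηs := hle ηs fun S => (hη S).2.2.2.2.trans (hηE S)
  have hN : ∀ (φ : DualSolution L γ β → ℝ → ℝ) S, 0 ≤ l2Norm L (φ S) := fun _ _ =>
    l2Norm_nonneg _ _
  have hDs := isBigO_of_le_add (fun S => by
      rw [inv_mul_eq_div, div_mul_eq_mul_div, ← add_div, le_div_iff₀' (abs_pos.2 hβ)]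
      exact S.abs_mul_l2Norm_DΨs_le hL.le hγ)
    (hηu.const_mul_left |β|⁻¹) (hu.const_mul_left (γ / |β|)) (hN _)
  have hs := isBigO_of_le_add (fun S => S.l2Norm_Ψs_le hL) hηq (hDs.const_mul_left L) (hN _)
  have hDr := isBigO_of_le_add (fun S => S.l2Norm_DΨr_le hL.le) hs hηq (hN _)
  have hr := isBigO_of_le_add (fun S => S.l2Norm_Ψr_le hL) hηp (hDr.const_mul_left L) (hN _)
  have hDp := isBigO_of_le_add (fun S => S.l2Norm_DΨp_le hL.le) hr hηp (hN _)
  have hp := isBigO_of_le_add (fun S => S.l2Norm_Ψp_le hL) hηr (hDp.const_mul_left L) (hN _)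
  have hDq := isBigO_of_le_add (fun S => S.l2Norm_DΨq_le hL.le) hp hηr (hN _)
  have hq := isBigO_of_le_add (fun S => S.l2Norm_Ψq_le hL) hηs (hDq.const_mul_left L) (hN _)
  have hDu := isBigO_of_le_add (fun S => S.l2Norm_DΨu_le hL.le) hq hηs (hN _)
  exact ((((hu.add hDu).add (hq.add hDq)).add (hp.add hDp)).add (hr.add hDr)).add (hs.add hDs)

lemma isBigO_l2Norm_Ψu (hL : 0 < L) (hγ : 0 < γ) (hβ : β ≠ 0) :
    (fun S : DualSolution L γ β => l2Norm L S.Ψu) =O[⊤] fun S => S.dataNorm := by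
  obtain ⟨c, hc0, hc⟩ := (isBigO_h1Norm hL hγ.le hβ).exists_nonneg
  rw [isBigOWith_top] at hc
  refine isBigO_of_le' ⊤ (c := ((1 + |β| * c) + |β| * c) / γ + 1) fun S => ?_
  have hE := S.dataNorm_nonneg
  have hX := l2Norm_nonneg L S.Ψu
  have hh1 : S.h1Norm ≤ c * (S.dataNorm + l2Norm L S.Ψu) := by
    simpa only [Real.norm_of_nonneg S.h1Norm_nonneg, Real.norm_of_nonneg (add_nonneg hE hX)]
      using hc S
  rw [Real.norm_of_nonneg hX, Real.norm_of_nonneg hE]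
  refine le_mul_of_mul_sq_le hγ hE (by positivity) (by positivity) ?_
  have := mul_le_mul_of_nonneg_left hh1 (mul_nonneg hE (abs_nonneg β))
  nlinarith [S.mul_sq_l2Norm_Ψu_le hL.le]

theorem exists_h1Norm_le (hL : 0 < L) (hγ : 0 < γ) (hβ : β ≠ 0) :
    ∃ C, 0 < C ∧ ∀ S : DualSolution L γ β, S.h1Norm ≤ C * S.dataNorm := by
  obtain ⟨C, hC, hbound⟩ := ((isBigO_h1Norm hL hγ.le hβ).trans
    ((isBigO_refl _ ⊤).add (isBigO_l2Norm_Ψu hL hγ hβ))).exists_pos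
  refine ⟨C, hC, fun S => ?_⟩
  simpa only [Real.norm_of_nonneg S.h1Norm_nonneg, Real.norm_of_nonneg S.dataNorm_nonneg]
    using isBigOWith_top.1 hbound S

end DualSolution

theorem stmt_12 (L γ β : ℝ) (hL : 0 < L) (hγ : 0 < γ) (hβ : β ≠ 0) :
    ∃ C : ℝ, 0 < C ∧
      ∀ (Ψu Ψq Ψp Ψr Ψs DΨu DΨq DΨp DΨr DΨs : ℝ → ℝ)
        (ηu ηq ηp ηr ηs : ℝ → ℝ),
        (∀ x ∈ Set.Icc 0 L, HasDerivWithinAt Ψu (DΨu x) (Set.Icc 0 L) x) →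
        (∀ x ∈ Set.Icc 0 L, HasDerivWithinAt Ψq (DΨq x) (Set.Icc 0 L) x) →
        (∀ x ∈ Set.Icc 0 L, HasDerivWithinAt Ψp (DΨp x) (Set.Icc 0 L) x) →
        (∀ x ∈ Set.Icc 0 L, HasDerivWithinAt Ψr (DΨr x) (Set.Icc 0 L) x) →
        (∀ x ∈ Set.Icc 0 L, HasDerivWithinAt Ψs (DΨs x) (Set.Icc 0 L) x) →
        ContinuousOn DΨu (Set.Icc 0 L) → ContinuousOn DΨq (Set.Icc 0 L) →
        ContinuousOn DΨp (Set.Icc 0 L) → ContinuousOn DΨr (Set.Icc 0 L) →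
        ContinuousOn DΨs (Set.Icc 0 L) →
        ContinuousOn ηu (Set.Icc 0 L) → ContinuousOn ηq (Set.Icc 0 L) →
        ContinuousOn ηp (Set.Icc 0 L) → ContinuousOn ηr (Set.Icc 0 L) →
        ContinuousOn ηs (Set.Icc 0 L) →
        Ψu 0 = Ψu L → Ψq 0 = Ψq L → Ψp 0 = Ψp L → Ψr 0 = Ψr L → Ψs 0 = Ψs L →
        (∀ x ∈ Set.Icc 0 L, DΨu x - Ψq x = ηs x) →
        (∀ x ∈ Set.Icc 0 L, DΨq x - Ψp x = -ηr x) →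
        (∀ x ∈ Set.Icc 0 L, DΨp x - Ψr x = ηp x) →
        (∀ x ∈ Set.Icc 0 L, DΨr x - Ψs x = -ηq x) →
        (∀ x ∈ Set.Icc 0 L, β * DΨs x + γ * Ψu x = ηu x) →
        (Real.sqrt (∫ x in (0:ℝ)..L, (Ψu x) ^ 2)
            + Real.sqrt (∫ x in (0:ℝ)..L, (DΨu x) ^ 2))
          + (Real.sqrt (∫ x in (0:ℝ)..L, (Ψq x) ^ 2)
            + Real.sqrt (∫ x in (0:ℝ)..L, (DΨq x) ^ 2))
          + (Real.sqrt (∫ x in (0:ℝ)..L, (Ψp x) ^ 2)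
            + Real.sqrt (∫ x in (0:ℝ)..L, (DΨp x) ^ 2))
          + (Real.sqrt (∫ x in (0:ℝ)..L, (Ψr x) ^ 2)
            + Real.sqrt (∫ x in (0:ℝ)..L, (DΨr x) ^ 2))
          + (Real.sqrt (∫ x in (0:ℝ)..L, (Ψs x) ^ 2)
            + Real.sqrt (∫ x in (0:ℝ)..L, (DΨs x) ^ 2))
        ≤ C * (Real.sqrt (∫ x in (0:ℝ)..L, (ηu x) ^ 2)
            + Real.sqrt (∫ x in (0:ℝ)..L, (ηq x) ^ 2)
            + Real.sqrt (∫ x in (0:ℝ)..L, (ηp x) ^ 2)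
            + Real.sqrt (∫ x in (0:ℝ)..L, (ηr x) ^ 2)
            + Real.sqrt (∫ x in (0:ℝ)..L, (ηs x) ^ 2)) := by
  obtain ⟨C, hC, hbound⟩ := DualSolution.exists_h1Norm_le hL hγ hβ
  refine ⟨C, hC, fun Ψu Ψq Ψp Ψr Ψs DΨu DΨq DΨp DΨr DΨs ηu ηq ηp ηr ηs => ?_⟩
  intro hΨu hΨq hΨp hΨr hΨs hDΨu hDΨq hDΨp hDΨr hDΨs hηu hηq hηp hηr hηs
    hu hq hp hr hs eqs eqr eqp eqq equ
  exact hbound ⟨Ψu, Ψq, Ψp, Ψr, Ψs, DΨu, DΨq, DΨp, DΨr, DΨs, ηu, ηq, ηp, ηr, ηs,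
    hΨu, hΨq, hΨp, hΨr, hΨs, hDΨu, hDΨq, hDΨp, hDΨr, hDΨs, hηu, hηq, hηp, hηr, hηs,
    hu, hq, hp, hr, hs, eqs, eqr, eqp, eqq, equ⟩
end
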